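/- arXiv:2306.04494 — 6 statements merged into one kernel-verified Lean document; each statement's English description precedes it below -/
import Mathlib

section
/- Let X be a real random variable with cdf F_X and quantile function Q⁻, and let u ∈ (0,1]. Define Xᵘ = Q⁻(V) where V is uniformly distributed on [0,u]. Then the cdf of Xᵘ satisfies F_{Xᵘ}(x) = F_X(x)/u for all x < Q⁻(u), and F_{Xᵘ}(x) = 1 for all x ≥ Q⁻(u). -/
/-! Since a cdf is monotone and right-continuous, `Q⁻(v) ≤ x ↔ v ≤ F x`. Hence the event
`{Q⁻(V) ≤ x}` is `{V ≤ min u (F x)}`, whose probability under `V ~ Uniform[0,u]` is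
`F x / u` when `F x < u` (i.e. `x < Q⁻(u)`) and `1` otherwise. -/

open Set MeasureTheory

/-- Lower generalized quantile function, valued in the extended reals. -/
noncomputable def Qminus (F : ℝ → ℝ) (u : ℝ) : EReal :=
  sInf ((fun x : ℝ => (x : EReal)) '' {x | u ≤ F x})

theorem Qminus_le_iff (f : StieltjesFunction ℝ) (v x : ℝ) :
    Qminus f v ≤ (x : EReal) ↔ v ≤ f x := by
  refine ⟨fun hQ => ?_, fun hv => sInf_le ⟨x, hv, rfl⟩⟩
  by_contra! hfx
  -- right continuity pushes `f < v` a little to the right of `x`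
  obtain ⟨y, hfy, hxy⟩ : ∃ y, f y < v ∧ x < y :=
    ((((f.right_continuous x).mono Ioi_subset_Ici_self).eventually_lt_const hfx).and
      self_mem_nhdsWithin).exists
  have hyQ : (y : EReal) ≤ Qminus f v := by
    refine le_sInf ?_
    rintro _ ⟨z, hz, rfl⟩
    exact EReal.coe_le_coe_iff.2 (f.mono.reflect_lt (hfy.trans_le hz)).le
  exact hxy.not_ge (EReal.coe_le_coe_iff.1 (hyQ.trans hQ))

theorem setOf_mem_Icc_and_Qminus_le (f : StieltjesFunction ℝ) (u x : ℝ) :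
    {v : ℝ | v ∈ Icc (0:ℝ) u ∧ Qminus f v ≤ (x : EReal)} = Icc 0 (min u (f x)) := by
  ext v
  simp only [mem_ofPred_eq, mem_Icc, Qminus_le_iff, le_min_iff]
  tauto

/-- let `X` have law `μ` and cdf `F`, `u ∈ (0,1]`, and let
`Xᵘ = Q⁻(V)` with `V ~ Uniform[0,u]` (law `(1/u)·Leb|_{[0,u]}`). Then the cdf of `Xᵘ`
equals `F(x)/u` for `x < Q⁻(u)` and equals `1` for `x ≥ Q⁻(u)`. -/
theorem truncated_quantile_cdf (μ : Measure ℝ) [IsProbabilityMeasure μ]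
    (F : ℝ → ℝ) (hF : ∀ x, F x = (μ (Iic x)).toReal)
    (u : ℝ) (hu : u ∈ Ioc (0:ℝ) 1) :
    (∀ x : ℝ, (x : EReal) < Qminus F u →
      ((ENNReal.ofReal u)⁻¹
        * volume {v : ℝ | v ∈ Icc (0:ℝ) u ∧ Qminus F v ≤ (x : EReal)}).toReal
        = F x / u) ∧
    (∀ x : ℝ, Qminus F u ≤ (x : EReal) →
      (ENNReal.ofReal u)⁻¹
        * volume {v : ℝ | v ∈ Icc (0:ℝ) u ∧ Qminus F v ≤ (x : EReal)} = 1) := by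
  obtain rfl : F = ProbabilityTheory.cdf μ := by
    funext y
    rw [hF, ProbabilityTheory.cdf_eq_real, measureReal_def]
  refine ⟨fun x hx => ?_, fun x hx => ?_⟩
  · have hFu : ProbabilityTheory.cdf μ x < u :=
      not_le.1 fun h => hx.not_ge ((Qminus_le_iff _ u x).2 h)
    rw [setOf_mem_Icc_and_Qminus_le, min_eq_right hFu.le, Real.volume_Icc, sub_zero,
      ENNReal.toReal_mul, ENNReal.toReal_inv, ENNReal.toReal_ofReal hu.1.le,
      ENNReal.toReal_ofReal (ProbabilityTheory.cdf_nonneg μ x), inv_mul_eq_div]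
  · rw [Qminus_le_iff] at hx
    rw [setOf_mem_Icc_and_Qminus_le, min_eq_left hx, Real.volume_Icc, sub_zero]
    exact ENNReal.inv_mul_cancel (ENNReal.ofReal_pos.2 hu.1).ne' ENNReal.ofReal_ne_top
end

section
/- Suppose for t ∈ {0,1}, U_t ~ Uniform[0,1], (Y_t, D) =_d (Q⁻_{Y_t}(U_t), D) with D binary and q = P(D=0) ∈ (0,1). If the joint subdistribution functions satisfy P(U_0 ≤ v, D = 0) = P(U_1 ≤ v, D = 0) for all v ∈ [0,1], then for every u in Ran(F_{Y_0}) ∩ Ran(F_{Y_1}) the subcopula values coincide, i.e. C_{Y_0,D}(u, q) = C_{Y_1,D}(u, q), where C_{Y_t,D}(F_{Y_t}(y), q) := P(Y_t ≤ y, D = 0). -/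
open Set MeasureTheory

/-- Real-valued lower generalized quantile function `Q⁻(u) = inf {x : F x ≥ u}`. -/
noncomputable def Qreal (F : ℝ → ℝ) (u : ℝ) : ℝ := sInf {x : ℝ | u ≤ F x}

open Filter Topology ProbabilityTheory

/-- Galois-type equivalence for the lower quantile of a monotone right-continuous `F`. -/
lemma Qreal_le_iff (F : ℝ → ℝ) (hmono : Monotone F)
    (hrc : ∀ a, ContinuousWithinAt F (Ici a) a)
    (u y : ℝ) (hex : ∃ x, u ≤ F x) (hbd : ∃ x, F x < u) :
    Qreal F u ≤ y ↔ u ≤ F y := by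
  set S : Set ℝ := {x : ℝ | u ≤ F x} with hS
  obtain ⟨x₀, hx₀⟩ := hbd
  have hBd : BddBelow S := by
    refine ⟨x₀, fun x hx => ?_⟩
    by_contra h
    push_neg at h
    exact absurd (le_trans hx (hmono h.le)) (not_le.mpr hx₀)
  constructor
  · intro h
    have key : ∀ ε : ℝ, 0 < ε → u ≤ F (sInf S + ε) := by
      intro ε hε
      obtain ⟨s, hs, hslt⟩ := exists_lt_of_csInf_lt hex (by linarith : sInf S < sInf S + ε)
      exact le_trans hs (hmono hslt.le)
    have htend : Filter.Tendsto (fun n : ℕ => sInf S + 1 / (n + 1)) atTop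
        (nhdsWithin (sInf S) (Ici (sInf S))) := by
      apply tendsto_nhdsWithin_of_tendsto_nhds_of_eventually_within
      · have := tendsto_one_div_add_atTop_nhds_zero_nat (𝕜 := ℝ)
        have h2 := this.const_add (sInf S)
        simpa using h2
      · filter_upwards with n
        have : (0:ℝ) ≤ 1 / (n + 1) := by positivity
        simp only [mem_Ici]; linarith
    have hF : Filter.Tendsto (fun n : ℕ => F (sInf S + 1 / (n + 1))) atTop (𝓝 (F (sInf S))) :=
      (hrc (sInf S)).tendsto.comp htend
    have ha : u ≤ F (sInf S) :=
      ge_of_tendsto hF (Filter.Eventually.of_forall fun n => key _ (by positivity))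
    exact le_trans ha (hmono h)
  · intro h
    exact csInf_le hBd h

/-- For one arm: `P(Y ≤ y, D = 0) = P(U ≤ F y, D = 0)`. -/
lemma arm_eq {Ω : Type*} [MeasurableSpace Ω] (μ : Measure Ω) [IsProbabilityMeasure μ]
    (Y D U : Ω → ℝ) (hY : Measurable Y) (hD : Measurable D) (hU : Measurable U)
    (F : ℝ → ℝ) (hF : ∀ y, F y = (μ {ω | Y ω ≤ y}).toReal)
    (hUunif : Measure.map U μ = volume.restrict (Icc (0:ℝ) 1))
    (hdist : Measure.map (fun ω => (Y ω, D ω)) μ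
      = Measure.map (fun ω => (Qreal F (U ω), D ω)) μ)
    (y : ℝ) :
    μ {ω | Y ω ≤ y ∧ D ω = 0} = μ {ω | U ω ≤ F y ∧ D ω = 0} := by
  set ν : Measure ℝ := Measure.map Y μ with hν
  have hνprob : IsProbabilityMeasure ν := Measure.isProbabilityMeasure_map hY.aemeasurable
  have hFcdf : ∀ x, F x = cdf ν x := by
    intro x
    rw [hF x, cdf_eq_real, measureReal_def, hν, Measure.map_apply hY measurableSet_Iic]
    rfl
  have hmono : Monotone F := by
    intro a b hab
    rw [hFcdf a, hFcdf b]
    exact monotone_cdf ν hab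
  have hrc : ∀ a, ContinuousWithinAt F (Ici a) a := by
    intro a
    have : F = fun x => cdf ν x := funext hFcdf
    rw [this]
    exact (cdf ν).right_continuous a
  -- the pair with Qreal is a.e.-measurable (else map = 0, contradicting hdist)
  have hAE : AEMeasurable (fun ω => (Qreal F (U ω), D ω)) μ := by
    by_contra h
    rw [Measure.map_of_not_aemeasurable h] at hdist
    have h1 : Measure.map (fun ω => (Y ω, D ω)) μ Set.univ = 1 := by
      rw [Measure.map_apply (hY.prodMk hD) MeasurableSet.univ]
      simp
    rw [hdist] at h1
    simp at h1
  have hT : MeasurableSet {p : ℝ × ℝ | p.1 ≤ y ∧ p.2 = 0} := by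
    have : {p : ℝ × ℝ | p.1 ≤ y ∧ p.2 = 0} = (Iic y) ×ˢ ({0} : Set ℝ) := by
      ext ⟨a, b⟩; simp
    rw [this]
    exact measurableSet_Iic.prod (measurableSet_singleton 0)
  have h1 : μ {ω | Y ω ≤ y ∧ D ω = 0}
      = Measure.map (fun ω => (Y ω, D ω)) μ {p : ℝ × ℝ | p.1 ≤ y ∧ p.2 = 0} := by
    rw [Measure.map_apply (hY.prodMk hD) hT]
    rfl
  have h2 : Measure.map (fun ω => (Qreal F (U ω), D ω)) μ {p : ℝ × ℝ | p.1 ≤ y ∧ p.2 = 0}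
      = μ {ω | Qreal F (U ω) ≤ y ∧ D ω = 0} := by
    rw [Measure.map_apply_of_aemeasurable hAE hT]
    rfl
  rw [h1, hdist, h2]
  -- almost every ω has U ω ∈ (0,1)
  have hae : ∀ᵐ ω ∂μ, U ω ∈ Ioo (0:ℝ) 1 := by
    have hmeas : μ (U ⁻¹' (Ioo (0:ℝ) 1)ᶜ) = 0 := by
      rw [← Measure.map_apply hU measurableSet_Ioo.compl, hUunif,
        Measure.restrict_apply measurableSet_Ioo.compl]
      have : (Ioo (0:ℝ) 1)ᶜ ∩ Icc (0:ℝ) 1 = Icc (0:ℝ) 1 \ Ioo (0:ℝ) 1 := by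
        rw [Set.inter_comm]; rfl
      rw [this, Set.Icc_diff_Ioo_same (by norm_num : (0:ℝ) ≤ 1)]
      exact (Set.toFinite ({0, 1} : Set ℝ)).measure_zero volume
    rw [ae_iff]
    convert hmeas using 2
    rfl
  refine measure_congr ?_
  rw [Filter.eventuallyEq_set]
  filter_upwards [hae] with ω hω
  obtain ⟨h0, h1'⟩ := hω
  have hex : ∃ x, U ω ≤ F x := by
    have h := ((tendsto_cdf_atTop ν).eventually (eventually_ge_nhds h1')).exists
    obtain ⟨x, hx⟩ := h
    exact ⟨x, by rw [hFcdf]; exact hx⟩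
  have hbd : ∃ x, F x < U ω := by
    have h := ((tendsto_cdf_atBot ν).eventually (eventually_lt_nhds h0)).exists
    obtain ⟨x, hx⟩ := h
    exact ⟨x, by rw [hFcdf]; exact hx⟩
  show (Qreal F (U ω) ≤ y ∧ D ω = 0) ↔ (U ω ≤ F y ∧ D ω = 0)
  exact and_congr_left' (Qreal_le_iff F hmono hrc _ _ hex hbd)

/-- suppose for `t ∈ {0,1}`, `U_t ~ Uniform[0,1]` and
`(Y_t, D) =_d (Q⁻_{Y_t}(U_t), D)` with `D` binary and `q = P(D=0) ∈ (0,1)`.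
If `P(U₀ ≤ v, D=0) = P(U₁ ≤ v, D=0)` for all `v ∈ [0,1]`, then the subcopulas of
`(Y_t, D)` agree on the common range of the cdfs: whenever `F₀(y) = F₁(y')` (a common
value `u ∈ Ran F₀ ∩ Ran F₁), the subcopula values coincide,
`P(Y₀ ≤ y, D=0) = P(Y₁ ≤ y', D=0)`. -/
theorem subcopula_agreement
    {Ω : Type*} [MeasurableSpace Ω] (μ : Measure Ω) [IsProbabilityMeasure μ]
    (Y0 Y1 D U0 U1 : Ω → ℝ)
    (hY0 : Measurable Y0) (hY1 : Measurable Y1) (hD : Measurable D)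
    (hU0 : Measurable U0) (hU1 : Measurable U1)
    (hD01 : ∀ ω, D ω = 0 ∨ D ω = 1)
    (hq : (μ {ω | D ω = 0}).toReal ∈ Ioo (0:ℝ) 1)
    (F0 F1 : ℝ → ℝ)
    (hF0 : ∀ y, F0 y = (μ {ω | Y0 ω ≤ y}).toReal)
    (hF1 : ∀ y, F1 y = (μ {ω | Y1 ω ≤ y}).toReal)
    (hU0unif : Measure.map U0 μ = volume.restrict (Icc (0:ℝ) 1))
    (hU1unif : Measure.map U1 μ = volume.restrict (Icc (0:ℝ) 1))
    (hdist0 : Measure.map (fun ω => (Y0 ω, D ω)) μ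
      = Measure.map (fun ω => (Qreal F0 (U0 ω), D ω)) μ)
    (hdist1 : Measure.map (fun ω => (Y1 ω, D ω)) μ
      = Measure.map (fun ω => (Qreal F1 (U1 ω), D ω)) μ)
    (hsub : ∀ v ∈ Icc (0:ℝ) 1,
      μ {ω | U0 ω ≤ v ∧ D ω = 0} = μ {ω | U1 ω ≤ v ∧ D ω = 0}) :
    ∀ y y' : ℝ, F0 y = F1 y' →
      μ {ω | Y0 ω ≤ y ∧ D ω = 0} = μ {ω | Y1 ω ≤ y' ∧ D ω = 0} := by
  intro y y' hyy'
  have hmem : F0 y ∈ Icc (0:ℝ) 1 := by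
    constructor
    · rw [hF0]; exact ENNReal.toReal_nonneg
    · rw [hF0]
      have h := ENNReal.toReal_mono ENNReal.one_ne_top
        (prob_le_one (μ := μ) (s := {ω | Y0 ω ≤ y}))
      simpa using h
  rw [arm_eq μ Y0 D U0 hY0 hD hU0 F0 hF0 hU0unif hdist0 y,
    hsub (F0 y) hmem, hyy',
    arm_eq μ Y1 D U1 hY1 hD hU1 F1 hF1 hU1unif hdist1 y']
end

section
/- In the bivariate Gaussian selection model, copula stability is equivalent to correlation stability: suppose (Y₀₀, Y₁₀, η) is jointly Gaussian with Y_{t0} ~ N(0, σ_t²), η ~ N(0,1), Corr(Y_{t0}, η) = ρ_t, and D = 1{η ≥ 0}. Then the joint subdistribution P(Y_{t0} ≤ y, D = 0) = Φ₂(y/σ_t, 0; ρ_t), and the horizontal subcopula C_{Y_{t0},D}(u, 1/2) = Φ₂(Φ⁻¹(u), 0; ρ_t); hence C_{Y₀₀,D}(u, 1/2) = C_{Y₁₀,D}(u, 1/2) for all u ∈ [0,1] if and only if ρ₀ = ρ₁. -/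
open Set MeasureTheory

/-- Standard bivariate normal density with correlation `ρ`. -/
noncomputable def binormDensity (ρ x y : ℝ) : ℝ :=
  (2 * Real.pi * Real.sqrt (1 - ρ ^ 2))⁻¹ *
    Real.exp (-(x ^ 2 - 2 * ρ * x * y + y ^ 2) / (2 * (1 - ρ ^ 2)))

/-- Standard bivariate normal cdf `Φ₂(a, b; ρ)`. -/
noncomputable def Phi2 (a b ρ : ℝ) : ℝ :=
  ∫ x in Iic a, ∫ y in Iic b, binormDensity ρ x y

/-- Standard normal cdf `Φ`. -/
noncomputable def stdNormCdf (x : ℝ) : ℝ :=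
  ∫ t in Iic x, Real.exp (-(t ^ 2) / 2) / Real.sqrt (2 * Real.pi)

/-- Standard normal quantile `Φ⁻¹`. -/
noncomputable def stdNormQuantile (u : ℝ) : ℝ := sInf {x : ℝ | u ≤ stdNormCdf x}

/-!
Since `D = 0` exactly when `η < 0`, `P(Y ≤ y, D = 0)` is the left limit at `0` of
`z ↦ Φ₂(y/σ, z; ρ)`, which is continuous, so it equals `Φ₂(y/σ, 0; ρ)`. Completing the square
in the bivariate density gives `Φ₂(a, b; ρ) = ∫_{x ≤ a} φ(x) Φ((b - ρx)/√(1-ρ²)) dx`. If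
`Φ₂(·, 0; ρ₀) = Φ₂(·, 0; ρ₁)`, the integrands agree, and at `x = -1` strict monotonicity of `Φ`
gives `ρ₀/√(1-ρ₀²) = ρ₁/√(1-ρ₁²)`, hence `ρ₀ = ρ₁`. Quantiles enter only through `Φ⁻¹(Φ(a)) = a`.
-/

open Filter Topology

noncomputable def stdNormPDF (x : ℝ) : ℝ := Real.exp (-(x ^ 2) / 2) / Real.sqrt (2 * Real.pi)

lemma stdNormPDF_pos (x : ℝ) : 0 < stdNormPDF x := by
  unfold stdNormPDF; positivity

@[fun_prop]
lemma continuous_stdNormPDF : Continuous stdNormPDF := by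
  unfold stdNormPDF; fun_prop

lemma exp_neg_sq_div_two_eq (x : ℝ) : Real.exp (-(x ^ 2) / 2) = Real.exp (-(1 / 2) * x ^ 2) := by
  ring_nf

lemma integrable_stdNormPDF : Integrable stdNormPDF := by
  show Integrable fun x ↦ Real.exp (-(x ^ 2) / 2) / Real.sqrt (2 * Real.pi)
  simp only [exp_neg_sq_div_two_eq]
  exact (integrable_exp_neg_mul_sq (by norm_num)).div_const _

lemma integral_stdNormPDF : ∫ x, stdNormPDF x = 1 := by
  simp only [stdNormPDF, exp_neg_sq_div_two_eq]
  rw [integral_div, integral_gaussian, div_eq_one_iff_eq (by positivity)]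
  congr 1
  ring

lemma stdNormCdf_eq_setIntegral (x : ℝ) : stdNormCdf x = ∫ t in Iic x, stdNormPDF t := rfl

lemma stdNormCdf_sub_stdNormCdf (a b : ℝ) :
    stdNormCdf b - stdNormCdf a = ∫ t in a..b, stdNormPDF t :=
  intervalIntegral.integral_Iic_sub_Iic integrable_stdNormPDF.integrableOn
    integrable_stdNormPDF.integrableOn

lemma stdNormCdf_lt_stdNormCdf {a b : ℝ} (hab : a < b) : stdNormCdf a < stdNormCdf b := by
  have := intervalIntegral.intervalIntegral_pos_of_pos
    integrable_stdNormPDF.intervalIntegrable stdNormPDF_pos hab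
  linarith [stdNormCdf_sub_stdNormCdf a b]

lemma stdNormCdf_strictMono : StrictMono stdNormCdf := fun _ _ ↦ stdNormCdf_lt_stdNormCdf

@[fun_prop]
lemma continuous_stdNormCdf : Continuous stdNormCdf := by
  have : stdNormCdf = fun b ↦ stdNormCdf 0 + ∫ t in (0 : ℝ)..b, stdNormPDF t := by
    funext b; linarith [stdNormCdf_sub_stdNormCdf 0 b]
  rw [this]
  exact continuous_const.add
    (intervalIntegral.continuous_primitive (fun _ _ ↦ integrable_stdNormPDF.intervalIntegrable) 0)

lemma stdNormCdf_nonneg (x : ℝ) : 0 ≤ stdNormCdf x :=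
  setIntegral_nonneg measurableSet_Iic fun t _ ↦ (stdNormPDF_pos t).le

lemma stdNormCdf_le_one (x : ℝ) : stdNormCdf x ≤ 1 :=
  integral_stdNormPDF ▸ setIntegral_le_integral integrable_stdNormPDF
    (Eventually.of_forall fun t ↦ (stdNormPDF_pos t).le)

lemma stdNormCdf_mem_Ioo (x : ℝ) : stdNormCdf x ∈ Ioo (0 : ℝ) 1 :=
  ⟨(stdNormCdf_nonneg (x - 1)).trans_lt (stdNormCdf_lt_stdNormCdf (by linarith)),
    (stdNormCdf_lt_stdNormCdf (lt_add_one x)).trans_le (stdNormCdf_le_one (x + 1))⟩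

lemma stdNormQuantile_stdNormCdf (x : ℝ) : stdNormQuantile (stdNormCdf x) = x := by
  have : {y : ℝ | stdNormCdf x ≤ stdNormCdf y} = Ici x := by
    ext y; simp [stdNormCdf_strictMono.le_iff_le]
  rw [stdNormQuantile, this, csInf_Ici]

lemma setIntegral_Iic_comp_sub_div {E : Type*} [NormedAddCommGroup E] [NormedSpace ℝ E]
    (f : ℝ → E) (b c : ℝ) {s : ℝ} (hs : 0 < s) :
    ∫ y in Iic b, f ((y - c) / s) = s • ∫ t in Iic ((b - c) / s), f t := by
  have hind : (Iic b).indicator (fun y ↦ f ((y - c) / s))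
      = fun y ↦ (Iic ((b - c) / s)).indicator f ((y - c) / s) := by
    funext y
    simp only [indicator_apply, mem_Iic, div_le_div_iff_of_pos_right hs, sub_le_sub_iff_right]
  rw [← integral_indicator measurableSet_Iic, ← integral_indicator measurableSet_Iic, hind,
    integral_sub_right_eq_self (fun y ↦ (Iic ((b - c) / s)).indicator f (y / s)) c,
    Measure.integral_comp_div, abs_of_pos hs]

lemma one_sub_sq_pos {ρ : ℝ} (hρ : ρ ∈ Ioo (-1 : ℝ) 1) : 0 < 1 - ρ ^ 2 := by
  nlinarith [hρ.1, hρ.2]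

lemma binormDensity_eq {ρ : ℝ} (hρ : ρ ∈ Ioo (-1 : ℝ) 1) (x y : ℝ) :
    binormDensity ρ x y = stdNormPDF x *
      (stdNormPDF ((y - ρ * x) / Real.sqrt (1 - ρ ^ 2)) / Real.sqrt (1 - ρ ^ 2)) := by
  have hρ2 := one_sub_sq_pos hρ
  have hs2 := Real.sq_sqrt hρ2.le
  have hexp : Real.exp (-(x ^ 2 - 2 * ρ * x * y + y ^ 2) / (2 * (1 - ρ ^ 2)))
      = Real.exp (-(x ^ 2) / 2) *
        Real.exp (-(((y - ρ * x) / Real.sqrt (1 - ρ ^ 2)) ^ 2) / 2) := by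
    rw [← Real.exp_add, div_pow, hs2]
    congr 1
    field_simp
    ring
  rw [binormDensity, hexp, stdNormPDF, stdNormPDF]
  field_simp
  rw [Real.sq_sqrt (by positivity)]

lemma setIntegral_Iic_binormDensity {ρ : ℝ} (hρ : ρ ∈ Ioo (-1 : ℝ) 1) (x b : ℝ) :
    ∫ y in Iic b, binormDensity ρ x y
      = stdNormPDF x * stdNormCdf ((b - ρ * x) / Real.sqrt (1 - ρ ^ 2)) := by
  have hs := Real.sqrt_pos.2 (one_sub_sq_pos hρ)
  simp_rw [binormDensity_eq hρ, integral_const_mul, integral_div,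
    setIntegral_Iic_comp_sub_div stdNormPDF b (ρ * x) hs, smul_eq_mul, stdNormCdf_eq_setIntegral]
  field_simp

lemma Phi2_eq_setIntegral {ρ : ℝ} (hρ : ρ ∈ Ioo (-1 : ℝ) 1) (a b : ℝ) :
    Phi2 a b ρ = ∫ x in Iic a,
      stdNormPDF x * stdNormCdf ((b - ρ * x) / Real.sqrt (1 - ρ ^ 2)) :=
  setIntegral_congr_fun measurableSet_Iic fun x _ ↦ setIntegral_Iic_binormDensity hρ x b

lemma norm_stdNormPDF_mul_stdNormCdf_le (x w : ℝ) :
    ‖stdNormPDF x * stdNormCdf w‖ ≤ stdNormPDF x := by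
  rw [Real.norm_of_nonneg (mul_nonneg (stdNormPDF_pos x).le (stdNormCdf_nonneg w))]
  exact mul_le_of_le_one_right (stdNormPDF_pos x).le (stdNormCdf_le_one w)

lemma integrable_stdNormPDF_mul_stdNormCdf {w : ℝ → ℝ} (hw : Measurable w) :
    Integrable fun x ↦ stdNormPDF x * stdNormCdf (w x) :=
  integrable_stdNormPDF.mono'
    (continuous_stdNormPDF.measurable.mul (continuous_stdNormCdf.measurable.comp hw)).aestronglyMeasurable
    (ae_of_all _ fun x ↦ norm_stdNormPDF_mul_stdNormCdf_le x (w x))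

lemma continuous_Phi2_snd {ρ : ℝ} (hρ : ρ ∈ Ioo (-1 : ℝ) 1) (a : ℝ) :
    Continuous fun b ↦ Phi2 a b ρ := by
  simp_rw [Phi2_eq_setIntegral hρ a]
  refine continuous_of_dominated (fun b ↦ ?_)
    (fun b ↦ ae_of_all _ fun x ↦ norm_stdNormPDF_mul_stdNormCdf_le x _)
    integrable_stdNormPDF.integrableOn (ae_of_all _ fun x ↦ ?_)
  · exact (integrable_stdNormPDF_mul_stdNormCdf (by fun_prop)).aestronglyMeasurable.restrict
  · exact continuous_const.mul (continuous_stdNormCdf.comp (by fun_prop))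

lemma toReal_measure_and_lt_of_continuousAt {Ω : Type*} [MeasurableSpace Ω] (μ : Measure Ω)
    [IsFiniteMeasure μ] (p : Ω → Prop) (η : Ω → ℝ) {G : ℝ → ℝ} {z : ℝ} (hG : ContinuousAt G z)
    (h : ∀ z', (μ {ω | p ω ∧ η ω ≤ z'}).toReal = G z') :
    (μ {ω | p ω ∧ η ω < z}).toReal = G z := by
  obtain ⟨u, hu_mono, hu_lt, hu_lim⟩ := exists_seq_strictMono_tendsto z
  let A : ℕ → Set Ω := fun n ↦ {ω | p ω ∧ η ω ≤ u n}
  have hA : Monotone A := fun m n hmn ω hω ↦ ⟨hω.1, hω.2.trans (hu_mono.monotone hmn)⟩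
  have hUnion : ⋃ n, A n = {ω | p ω ∧ η ω < z} := by
    ext ω
    simp only [A, mem_iUnion]
    constructor
    · rintro ⟨n, hp, hη⟩
      exact ⟨hp, hη.trans_lt (hu_lt n)⟩
    · rintro ⟨hp, hη⟩
      obtain ⟨n, hn⟩ := (hu_lim.eventually (lt_mem_nhds hη)).exists
      exact ⟨n, hp, hn.le⟩
  have hlim : Tendsto (fun n ↦ (μ (A n)).toReal) atTop (𝓝 (μ {ω | p ω ∧ η ω < z}).toReal) :=
    hUnion ▸ (ENNReal.tendsto_toReal (measure_ne_top μ _)).comp (tendsto_measure_iUnion_atTop hA)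
  refine tendsto_nhds_unique hlim ?_
  simp only [A, h]
  exact hG.tendsto.comp hu_lim

lemma hasDerivAt_setIntegral_Iic {E : Type*} [NormedAddCommGroup E] [NormedSpace ℝ E]
    [CompleteSpace E] {f : ℝ → E} (hf : Continuous f) (hfi : Integrable f) (c : ℝ) :
    HasDerivAt (fun a ↦ ∫ x in Iic a, f x) (f c) c := by
  have : (fun a ↦ ∫ x in Iic a, f x) = fun a ↦ (∫ x in Iic 0, f x) + ∫ x in (0 : ℝ)..a, f x :=
    funext fun a ↦ eq_add_of_sub_eq'
      (intervalIntegral.integral_Iic_sub_Iic hfi.integrableOn hfi.integrableOn)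
  rw [this]
  exact (intervalIntegral.integral_hasDerivAt_right hfi.intervalIntegrable
    (hf.stronglyMeasurableAtFilter _ _) hf.continuousAt).const_add _

lemma eq_of_forall_setIntegral_Iic_eq {E : Type*} [NormedAddCommGroup E] [NormedSpace ℝ E]
    [CompleteSpace E] {f g : ℝ → E} (hf : Continuous f) (hg : Continuous g)
    (hfi : Integrable f) (hgi : Integrable g)
    (h : ∀ a, ∫ x in Iic a, f x = ∫ x in Iic a, g x) : f = g :=
  funext fun c ↦ (hasDerivAt_setIntegral_Iic hf hfi c).unique
    (funext h ▸ hasDerivAt_setIntegral_Iic hg hgi c)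

lemma injOn_div_sqrt_one_sub_sq : InjOn (fun ρ : ℝ ↦ ρ / Real.sqrt (1 - ρ ^ 2)) (Ioo (-1) 1) := by
  intro ρ₀ hρ₀ ρ₁ hρ₁ h
  have hs₀ := Real.sqrt_pos.2 (one_sub_sq_pos hρ₀)
  have hs₁ := Real.sqrt_pos.2 (one_sub_sq_pos hρ₁)
  rw [div_eq_div_iff hs₀.ne' hs₁.ne'] at h
  have hsq : ρ₀ ^ 2 = ρ₁ ^ 2 := by
    have := congrArg (· ^ 2) h
    simp only [mul_pow, Real.sq_sqrt (one_sub_sq_pos hρ₀).le,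
      Real.sq_sqrt (one_sub_sq_pos hρ₁).le] at this
    linarith
  rw [hsq] at h
  exact mul_right_cancel₀ hs₁.ne' h

lemma eq_of_forall_Phi2_zero_eq {ρ₀ ρ₁ : ℝ} (hρ₀ : ρ₀ ∈ Ioo (-1 : ℝ) 1)
    (hρ₁ : ρ₁ ∈ Ioo (-1 : ℝ) 1) (h : ∀ a, Phi2 a 0 ρ₀ = Phi2 a 0 ρ₁) : ρ₀ = ρ₁ := by
  have hdensity := eq_of_forall_setIntegral_Iic_eq
    (f := fun x ↦ stdNormPDF x * stdNormCdf ((0 - ρ₀ * x) / Real.sqrt (1 - ρ₀ ^ 2)))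
    (g := fun x ↦ stdNormPDF x * stdNormCdf ((0 - ρ₁ * x) / Real.sqrt (1 - ρ₁ ^ 2)))
    (by fun_prop) (by fun_prop)
    (integrable_stdNormPDF_mul_stdNormCdf (by fun_prop))
    (integrable_stdNormPDF_mul_stdNormCdf (by fun_prop))
    (fun a ↦ by rw [← Phi2_eq_setIntegral hρ₀, ← Phi2_eq_setIntegral hρ₁, h])
  have hcdf := mul_left_cancel₀ (stdNormPDF_pos (-1)).ne' (congrFun hdensity (-1))
  apply injOn_div_sqrt_one_sub_sq hρ₀ hρ₁
  simpa using stdNormCdf_strictMono.injective hcdf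

theorem gaussian_copula_stability_iff_corr_general
    {Ω : Type*} [MeasurableSpace Ω] (μ : Measure Ω) [IsProbabilityMeasure μ]
    (Y00 Y10 η : Ω → ℝ)
    (σ0 σ1 ρ0 ρ1 : ℝ) (hσ0 : 0 < σ0) (hσ1 : 0 < σ1)
    (hρ0 : ρ0 ∈ Ioo (-1:ℝ) 1) (hρ1 : ρ1 ∈ Ioo (-1:ℝ) 1)
    (hjoint0 : ∀ y z : ℝ,
      (μ {ω | Y00 ω ≤ y ∧ η ω ≤ z}).toReal = Phi2 (y / σ0) z ρ0)
    (hjoint1 : ∀ y z : ℝ,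
      (μ {ω | Y10 ω ≤ y ∧ η ω ≤ z}).toReal = Phi2 (y / σ1) z ρ1)
    (D : Ω → ℝ) (hD : ∀ ω, D ω = if 0 ≤ η ω then 1 else 0) :
    (∀ y : ℝ, (μ {ω | Y00 ω ≤ y ∧ D ω = 0}).toReal = Phi2 (y / σ0) 0 ρ0) ∧
    (∀ y : ℝ, (μ {ω | Y10 ω ≤ y ∧ D ω = 0}).toReal = Phi2 (y / σ1) 0 ρ1) ∧
    (∀ u ∈ Ioo (0:ℝ) 1,
      (μ {ω | Y00 ω ≤ σ0 * stdNormQuantile u ∧ D ω = 0}).toReal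
        = Phi2 (stdNormQuantile u) 0 ρ0) ∧
    (∀ u ∈ Ioo (0:ℝ) 1,
      (μ {ω | Y10 ω ≤ σ1 * stdNormQuantile u ∧ D ω = 0}).toReal
        = Phi2 (stdNormQuantile u) 0 ρ1) ∧
    ((∀ u ∈ Ioo (0:ℝ) 1,
        Phi2 (stdNormQuantile u) 0 ρ0 = Phi2 (stdNormQuantile u) 0 ρ1)
      ↔ ρ0 = ρ1) := by
  have hD0 : ∀ ω, D ω = 0 ↔ η ω < 0 := fun ω ↦ by
    rw [hD ω]
    split_ifs with h <;> simpa using h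
  have subdist : ∀ (Y : Ω → ℝ) (σ ρ : ℝ), ρ ∈ Ioo (-1 : ℝ) 1 →
      (∀ y z, (μ {ω | Y ω ≤ y ∧ η ω ≤ z}).toReal = Phi2 (y / σ) z ρ) →
      ∀ y, (μ {ω | Y ω ≤ y ∧ D ω = 0}).toReal = Phi2 (y / σ) 0 ρ := by
    intro Y σ ρ hρ hjoint y
    simp only [hD0]
    exact toReal_measure_and_lt_of_continuousAt μ _ η
      (continuous_Phi2_snd hρ _).continuousAt (hjoint y)
  have at_quantile : ∀ (Y : Ω → ℝ) (σ ρ : ℝ), 0 < σ →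
      (∀ y, (μ {ω | Y ω ≤ y ∧ D ω = 0}).toReal = Phi2 (y / σ) 0 ρ) →
      ∀ u ∈ Ioo (0 : ℝ) 1, (μ {ω | Y ω ≤ σ * stdNormQuantile u ∧ D ω = 0}).toReal
        = Phi2 (stdNormQuantile u) 0 ρ := by
    intro Y σ ρ hσ hsub u _
    rw [hsub, mul_div_cancel_left₀ _ hσ.ne']
  have sub0 := subdist Y00 σ0 ρ0 hρ0 hjoint0
  have sub1 := subdist Y10 σ1 ρ1 hρ1 hjoint1
  refine ⟨sub0, sub1, at_quantile _ _ _ hσ0 sub0, at_quantile _ _ _ hσ1 sub1,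
    fun h ↦ eq_of_forall_Phi2_zero_eq hρ0 hρ1 fun a ↦ ?_, fun h _ _ ↦ h ▸ rfl⟩
  simpa only [stdNormQuantile_stdNormCdf] using h _ (stdNormCdf_mem_Ioo a)

/-- in the bivariate Gaussian selection model with
`(Y_{t0}, η)` bivariate normal, `Y_{t0} ~ N(0, σ_t²)`, `η ~ N(0,1)`,
`Corr(Y_{t0}, η) = ρ_t`, and `D = 1{η ≥ 0}` (so `P(D=0) = 1/2`):
the joint subdistribution is `P(Y_{t0} ≤ y, D=0) = Φ₂(y/σ_t, 0; ρ_t)`, the horizontal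
subcopula is `C_{Y_{t0},D}(u, 1/2) = Φ₂(Φ⁻¹(u), 0; ρ_t)` (evaluated at
`u = F_{Y_{t0}}(σ_t Φ⁻¹(u))`), and copula stability holds iff `ρ₀ = ρ₁`. -/
theorem gaussian_copula_stability_iff_corr
    {Ω : Type*} [MeasurableSpace Ω] (μ : Measure Ω) [IsProbabilityMeasure μ]
    (Y00 Y10 η : Ω → ℝ)
    (hY00 : Measurable Y00) (hY10 : Measurable Y10) (hη : Measurable η)
    (σ0 σ1 ρ0 ρ1 : ℝ) (hσ0 : 0 < σ0) (hσ1 : 0 < σ1)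
    (hρ0 : ρ0 ∈ Ioo (-1:ℝ) 1) (hρ1 : ρ1 ∈ Ioo (-1:ℝ) 1)
    (hjoint0 : ∀ y z : ℝ,
      (μ {ω | Y00 ω ≤ y ∧ η ω ≤ z}).toReal = Phi2 (y / σ0) z ρ0)
    (hjoint1 : ∀ y z : ℝ,
      (μ {ω | Y10 ω ≤ y ∧ η ω ≤ z}).toReal = Phi2 (y / σ1) z ρ1)
    (D : Ω → ℝ) (hD : ∀ ω, D ω = if 0 ≤ η ω then 1 else 0) :
    (∀ y : ℝ, (μ {ω | Y00 ω ≤ y ∧ D ω = 0}).toReal = Phi2 (y / σ0) 0 ρ0) ∧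
    (∀ y : ℝ, (μ {ω | Y10 ω ≤ y ∧ D ω = 0}).toReal = Phi2 (y / σ1) 0 ρ1) ∧
    (∀ u ∈ Ioo (0:ℝ) 1,
      (μ {ω | Y00 ω ≤ σ0 * stdNormQuantile u ∧ D ω = 0}).toReal
        = Phi2 (stdNormQuantile u) 0 ρ0) ∧
    (∀ u ∈ Ioo (0:ℝ) 1,
      (μ {ω | Y10 ω ≤ σ1 * stdNormQuantile u ∧ D ω = 0}).toReal
        = Phi2 (stdNormQuantile u) 0 ρ1) ∧
    ((∀ u ∈ Ioo (0:ℝ) 1,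
        Phi2 (stdNormQuantile u) 0 ρ0 = Phi2 (stdNormQuantile u) 0 ρ1)
      ↔ ρ0 = ρ1) :=
  gaussian_copula_stability_iff_corr_general μ Y00 Y10 η σ0 σ1 ρ0 ρ1 hσ0 hσ1 hρ0 hρ1 hjoint0 hjoint1
    D hD
end

section
/- In the same Gaussian model, parallel trends is equivalent to covariance stability of the latent index: with D = 1{η ≥ 0}, E[Y₁₀ − Y₀₀ | D=1] = E[Y₁₀ − Y₀₀ | D=0] if and only if ρ₀σ₀ = ρ₁σ₁. -/
open Set MeasureTheory

/-!
The bivariate normal density factors as `φ(y) · N(ρy, 1 - ρ²)(x)`. Hence the joint cdf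
identifies the law of `(Y/σ, η)`, both of its marginals are standard normal, and
`E[Y/σ; η ∈ t] = ρ E[η; η ∈ t]`. With `E[η; η ≥ 0] = -E[η; η < 0] = 1/√(2π)` and both
events of probability `1/2`, the two conditional means of `Y₁₀ - Y₀₀` are
`±2(σ₁ρ₁ - σ₀ρ₀)/√(2π)`, which agree iff `σ₁ρ₁ = σ₀ρ₀`.
-/

open Real ProbabilityTheory

variable {ρ : ℝ}

lemma binormDensity_eq_gaussianPDFReal_mul (hρ : ρ ^ 2 < 1) (x y : ℝ) :
    binormDensity ρ x y =
      gaussianPDFReal (ρ * y) (1 - ρ ^ 2).toNNReal x * gaussianPDFReal 0 1 y := by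
  have hv : 0 < 1 - ρ ^ 2 := by linarith
  simp only [binormDensity, gaussianPDFReal, Real.coe_toNNReal _ hv.le, NNReal.coe_one]
  rw [mul_mul_mul_comm, ← exp_add, ← mul_inv, ← sqrt_mul (by positivity),
    show 2 * π * (1 - ρ ^ 2) * (2 * π * 1) = (2 * π * √(1 - ρ ^ 2)) ^ 2 by
      rw [mul_pow, sq_sqrt hv.le]; ring, sqrt_sq (by positivity)]
  congr 2
  field_simp
  ring

lemma binormDensity_comm (x y : ℝ) : binormDensity ρ x y = binormDensity ρ y x := by
  simp only [binormDensity]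
  ring_nf

lemma binormDensity_nonneg (x y : ℝ) : 0 ≤ binormDensity ρ x y := by
  unfold binormDensity
  positivity

lemma measurable_binormDensity : Measurable fun p : ℝ × ℝ => binormDensity ρ p.1 p.2 := by
  unfold binormDensity
  fun_prop

lemma lintegral_binormDensity_fst (hρ : ρ ^ 2 < 1) (y : ℝ) :
    ∫⁻ x, ENNReal.ofReal (binormDensity ρ x y) = gaussianPDF 0 1 y := by
  have hv : (1 - ρ ^ 2).toNNReal ≠ 0 := by simpa using hρ
  simp_rw [binormDensity_eq_gaussianPDFReal_mul hρ,
    ENNReal.ofReal_mul (gaussianPDFReal_nonneg _ _ _)]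
  rw [lintegral_mul_const _ (measurable_gaussianPDFReal _ _).ennreal_ofReal,
    lintegral_gaussianPDFReal_eq_one _ hv, one_mul, gaussianPDF]

noncomputable def binormMeasure (ρ : ℝ) : Measure (ℝ × ℝ) :=
  volume.withDensity fun p => ENNReal.ofReal (binormDensity ρ p.1 p.2)

lemma binormMeasure_univ_prod (hρ : ρ ^ 2 < 1) {t : Set ℝ} (ht : MeasurableSet t) :
    binormMeasure ρ (univ ×ˢ t) = gaussianReal 0 1 t := by
  rw [binormMeasure, withDensity_apply _ (MeasurableSet.univ.prod ht), Measure.volume_eq_prod,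
    setLIntegral_prod_symm _ measurable_binormDensity.ennreal_ofReal.aemeasurable,
    gaussianReal_apply _ one_ne_zero]
  simp only [Measure.restrict_univ, lintegral_binormDensity_fst hρ]

lemma binormMeasure_prod_univ (hρ : ρ ^ 2 < 1) {s : Set ℝ} (hs : MeasurableSet s) :
    binormMeasure ρ (s ×ˢ univ) = gaussianReal 0 1 s := by
  rw [binormMeasure, withDensity_apply _ (hs.prod MeasurableSet.univ), Measure.volume_eq_prod,
    setLIntegral_prod _ measurable_binormDensity.ennreal_ofReal.aemeasurable,
    gaussianReal_apply _ one_ne_zero]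
  simp only [Measure.restrict_univ]
  refine lintegral_congr fun x => ?_
  simp_rw [binormDensity_comm x]
  exact lintegral_binormDensity_fst hρ x

lemma isProbabilityMeasure_binormMeasure (hρ : ρ ^ 2 < 1) :
    IsProbabilityMeasure (binormMeasure ρ) :=
  ⟨by rw [← univ_prod_univ, binormMeasure_univ_prod hρ .univ, measure_univ]⟩

lemma map_fst_binormMeasure (hρ : ρ ^ 2 < 1) :
    (binormMeasure ρ).map Prod.fst = gaussianReal 0 1 := by
  ext s hs
  rw [Measure.map_apply measurable_fst hs, ← prod_univ, binormMeasure_prod_univ hρ hs]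

lemma map_snd_binormMeasure (hρ : ρ ^ 2 < 1) :
    (binormMeasure ρ).map Prod.snd = gaussianReal 0 1 := by
  ext t ht
  rw [Measure.map_apply measurable_snd ht, ← univ_prod, binormMeasure_univ_prod hρ ht]

lemma integrable_binormDensity (hρ : ρ ^ 2 < 1) :
    Integrable fun p : ℝ × ℝ => binormDensity ρ p.1 p.2 := by
  refine (lintegral_ofReal_ne_top_iff_integrable measurable_binormDensity.aestronglyMeasurable
    (ae_of_all _ fun p => binormDensity_nonneg p.1 p.2)).1 ?_
  have := isProbabilityMeasure_binormMeasure hρ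
  rw [← setLIntegral_univ, ← withDensity_apply _ .univ]
  exact measure_ne_top (binormMeasure ρ) univ

lemma binormMeasure_Iic_prod_Iic (hρ : ρ ^ 2 < 1) (a b : ℝ) :
    binormMeasure ρ (Iic a ×ˢ Iic b) = ENNReal.ofReal (Phi2 a b ρ) := by
  rw [binormMeasure, withDensity_apply _ (measurableSet_Iic.prod measurableSet_Iic),
    ← ofReal_integral_eq_lintegral_ofReal (integrable_binormDensity hρ).integrableOn
      (ae_of_all _ fun p => binormDensity_nonneg p.1 p.2), Measure.volume_eq_prod,
    setIntegral_prod _ (integrable_binormDensity hρ).integrableOn, Phi2]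

lemma isCountablySpanning_range_Iic : IsCountablySpanning (range (Iic : ℝ → Set ℝ)) :=
  ⟨fun n : ℕ => Iic (n : ℝ), fun _ => mem_range_self _,
    iUnion_eq_univ_iff.2 fun x => ⟨⌈x⌉₊, mem_Iic.2 (Nat.le_ceil x)⟩⟩

lemma MeasureTheory.Measure.ext_of_Iic_prod_Iic {μ ν : Measure (ℝ × ℝ)}
    [IsProbabilityMeasure μ] [IsProbabilityMeasure ν]
    (h : ∀ a b, μ (Iic a ×ˢ Iic b) = ν (Iic a ×ˢ Iic b)) : μ = ν := by
  have hIic : MeasurableSpace.generateFrom (range (Iic : ℝ → Set ℝ)) = borel ℝ :=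
    (borel_eq_generateFrom_Iic ℝ).symm
  refine ext_of_generate_finite _ ?_ (isPiSystem_Iic.prod isPiSystem_Iic) ?_ (by simp)
  · rw [← generateFrom_eq_prod hIic hIic isCountablySpanning_range_Iic
      isCountablySpanning_range_Iic]
  · rintro _ ⟨_, ⟨a, rfl⟩, _, ⟨b, rfl⟩, rfl⟩
    exact h a b

lemma integral_binormDensity_mul_fst (hρ : ρ ^ 2 < 1) (y : ℝ) :
    ∫ x, binormDensity ρ x y * x = ρ * y * gaussianPDFReal 0 1 y := by
  have hv : (1 - ρ ^ 2).toNNReal ≠ 0 := by simpa using hρ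
  simp_rw [binormDensity_eq_gaussianPDFReal_mul hρ, mul_right_comm _ (gaussianPDFReal 0 1 y)]
  have hmean : ∫ x, gaussianPDFReal (ρ * y) (1 - ρ ^ 2).toNNReal x * x = ρ * y := by
    have h := integral_id_gaussianReal (μ := ρ * y) (v := (1 - ρ ^ 2).toNNReal)
    rwa [integral_gaussianReal_eq_integral_smul hv] at h
  rw [integral_mul_const, hmean]

lemma integrable_fst_binormMeasure (hρ : ρ ^ 2 < 1) :
    Integrable (fun p : ℝ × ℝ => p.1) (binormMeasure ρ) := by
  have h : Integrable id ((binormMeasure ρ).map Prod.fst) := by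
    rw [map_fst_binormMeasure hρ]
    exact memLp_one_iff_integrable.1 (memLp_id_gaussianReal 1)
  exact h.comp_measurable measurable_fst

lemma setIntegral_univ_prod_fst_binormMeasure (hρ : ρ ^ 2 < 1) {t : Set ℝ}
    (ht : MeasurableSet t) :
    ∫ p in univ ×ˢ t, p.1 ∂binormMeasure ρ = ρ * ∫ y in t, y * gaussianPDFReal 0 1 y := by
  have hf : Measurable fun p : ℝ × ℝ => ENNReal.ofReal (binormDensity ρ p.1 p.2) :=
    measurable_binormDensity.ennreal_ofReal
  have hint : Integrable (fun p : ℝ × ℝ => binormDensity ρ p.1 p.2 * p.1)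
      ((volume : Measure ℝ).prod (volume.restrict t)) := by
    have := ((integrable_withDensity_iff_integrable_smul' hf (ae_of_all _ fun _ =>
      ENNReal.ofReal_lt_top)).1 (integrable_fst_binormMeasure hρ)).restrict (s := univ ×ˢ t)
    simpa [ENNReal.toReal_ofReal (binormDensity_nonneg _ _), Measure.volume_eq_prod,
      ← Measure.prod_restrict] using this
  rw [binormMeasure, setIntegral_withDensity_eq_setIntegral_toReal_smul hf
      (ae_of_all _ fun _ => ENNReal.ofReal_lt_top) _ (MeasurableSet.univ.prod ht),
    Measure.volume_eq_prod, ← Measure.prod_restrict, Measure.restrict_univ]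
  simp only [ENNReal.toReal_ofReal (binormDensity_nonneg _ _), smul_eq_mul]
  rw [integral_prod_symm _ hint, ← integral_const_mul]
  simp only [integral_binormDensity_mul_fst hρ]
  congr 1 with y
  ring

lemma gaussianPDFReal_zero_one (x : ℝ) :
    gaussianPDFReal 0 1 x = (√(2 * π))⁻¹ * exp (-(1 / 2) * x ^ 2) := by
  simp only [gaussianPDFReal, NNReal.coe_one, mul_one, sub_zero]
  ring_nf

lemma gaussianReal_Ici_zero : gaussianReal 0 1 (Ici 0) = 2⁻¹ := by
  rw [gaussianReal_apply_eq_integral _ one_ne_zero, integral_Ici_eq_integral_Ioi]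
  simp_rw [gaussianPDFReal_zero_one]
  have hsqrt : (√(2 * π))⁻¹ * (√(π / (1 / 2)) / 2) = 2⁻¹ := by
    rw [show π / (1 / 2) = 2 * π by ring]
    field_simp
  rw [integral_const_mul, integral_gaussian_Ioi, hsqrt, ENNReal.ofReal_inv_of_pos two_pos,
    ENNReal.ofReal_ofNat]

lemma gaussianReal_Iio_zero : gaussianReal 0 1 (Iio 0) = 2⁻¹ := by
  rw [← compl_Ici, prob_compl_eq_one_sub measurableSet_Ici, gaussianReal_Ici_zero,
    ENNReal.one_sub_inv_two]

lemma integral_Ioi_mul_exp_neg_mul_sq {b : ℝ} (hb : 0 < b) :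
    ∫ x in Ioi (0 : ℝ), x * exp (-b * x ^ 2) = (2 * b)⁻¹ := by
  apply Complex.ofReal_injective
  rw [← integral_complex_ofReal]
  push_cast
  exact integral_mul_cexp_neg_mul_sq (by simpa using hb)

lemma setIntegral_Ici_zero_mul_gaussianPDFReal :
    ∫ y in Ici 0, y * gaussianPDFReal 0 1 y = (√(2 * π))⁻¹ := by
  simp_rw [integral_Ici_eq_integral_Ioi, gaussianPDFReal_zero_one,
    mul_left_comm _ (√(2 * π))⁻¹]
  rw [integral_const_mul, integral_Ioi_mul_exp_neg_mul_sq (by norm_num)]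
  norm_num

lemma setIntegral_Iio_zero_mul_gaussianPDFReal :
    ∫ y in Iio 0, y * gaussianPDFReal 0 1 y = -(√(2 * π))⁻¹ := by
  have hint : Integrable fun y => y * gaussianPDFReal 0 1 y := by
    simp_rw [gaussianPDFReal_zero_one, mul_left_comm _ (√(2 * π))⁻¹]
    exact (integrable_mul_exp_neg_mul_sq (by norm_num)).const_mul _
  have hmean : ∫ y, y * gaussianPDFReal 0 1 y = 0 := by
    have h := integral_id_gaussianReal (μ := 0) (v := 1)
    simpa [integral_gaussianReal_eq_integral_smul, mul_comm] using h
  rw [← compl_Ici, setIntegral_compl measurableSet_Ici hint, hmean,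
    setIntegral_Ici_zero_mul_gaussianPDFReal, zero_sub]

section Model

variable {Ω : Type*} [MeasurableSpace Ω] {μ : Measure Ω} {Y η : Ω → ℝ} {σ : ℝ}

lemma map_eq_binormMeasure [IsProbabilityMeasure μ] (hY : Measurable Y) (hη : Measurable η)
    (hσ : 0 < σ) (hρ : ρ ^ 2 < 1)
    (hjoint : ∀ y z : ℝ, (μ {ω | Y ω ≤ y ∧ η ω ≤ z}).toReal = Phi2 (y / σ) z ρ) :
    μ.map (fun ω => (Y ω / σ, η ω)) = binormMeasure ρ := by
  have hT : Measurable fun ω => (Y ω / σ, η ω) := (hY.div_const σ).prodMk hη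
  have := Measure.isProbabilityMeasure_map (μ := μ) hT.aemeasurable
  have := isProbabilityMeasure_binormMeasure hρ
  refine Measure.ext_of_Iic_prod_Iic fun a b => ?_
  have hpre : (fun ω => (Y ω / σ, η ω)) ⁻¹' (Iic a ×ˢ Iic b)
      = {ω | Y ω ≤ a * σ ∧ η ω ≤ b} := by
    ext ω
    simp [div_le_iff₀ hσ]
  rw [Measure.map_apply hT (measurableSet_Iic.prod measurableSet_Iic), hpre,
    ← ENNReal.ofReal_toReal (measure_ne_top μ _), hjoint, mul_div_cancel_right₀ a hσ.ne',
    binormMeasure_Iic_prod_Iic hρ]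

lemma map_eq_gaussianReal_of_map_eq_binormMeasure (hY : Measurable Y) (hη : Measurable η)
    (hρ : ρ ^ 2 < 1) (hmap : μ.map (fun ω => (Y ω / σ, η ω)) = binormMeasure ρ) :
    μ.map η = gaussianReal 0 1 := by
  rw [← map_snd_binormMeasure hρ, ← hmap, Measure.map_map measurable_snd
    ((hY.div_const σ).prodMk hη)]
  rfl

lemma setIntegral_preimage_eq_of_map_eq_binormMeasure (hY : Measurable Y) (hη : Measurable η)
    (hσ : σ ≠ 0) (hρ : ρ ^ 2 < 1)
    (hmap : μ.map (fun ω => (Y ω / σ, η ω)) = binormMeasure ρ)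
    {t : Set ℝ} (ht : MeasurableSet t) :
    ∫ ω in η ⁻¹' t, Y ω ∂μ = σ * ρ * ∫ y in t, y * gaussianPDFReal 0 1 y := by
  have hT : Measurable fun ω => (Y ω / σ, η ω) := (hY.div_const σ).prodMk hη
  have hpre : η ⁻¹' t = (fun ω => (Y ω / σ, η ω)) ⁻¹' (univ ×ˢ t) := by
    ext ω
    simp
  calc ∫ ω in η ⁻¹' t, Y ω ∂μ
      = ∫ ω in (fun ω => (Y ω / σ, η ω)) ⁻¹' (univ ×ˢ t), σ * (Y ω / σ) ∂μ := by
        simp_rw [hpre, mul_div_cancel₀ _ hσ]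
    _ = ∫ p in univ ×ˢ t, σ * p.1 ∂binormMeasure ρ := by
        rw [← hmap, setIntegral_map (MeasurableSet.univ.prod ht) (by fun_prop) hT.aemeasurable]
    _ = σ * ρ * ∫ y in t, y * gaussianPDFReal 0 1 y := by
        rw [integral_const_mul, setIntegral_univ_prod_fst_binormMeasure hρ ht, mul_assoc]

end Model

/-- in the Gaussian model with `(Y_{t0}, η)` bivariate normal,
`Y_{t0} ~ N(0, σ_t²)`, `η ~ N(0,1)`, `Corr(Y_{t0}, η) = ρ_t`, and `D = 1{η ≥ 0}`,
parallel trends `E[Y₁₀ − Y₀₀ | D=1] = E[Y₁₀ − Y₀₀ | D=0]` holds iff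
`ρ₀σ₀ = ρ₁σ₁`. -/
theorem gaussian_parallel_trends_iff
    {Ω : Type*} [MeasurableSpace Ω] (μ : Measure Ω) [IsProbabilityMeasure μ]
    (Y00 Y10 η : Ω → ℝ)
    (hY00 : Measurable Y00) (hY10 : Measurable Y10) (hη : Measurable η)
    (σ0 σ1 ρ0 ρ1 : ℝ) (hσ0 : 0 < σ0) (hσ1 : 0 < σ1)
    (hρ0 : ρ0 ∈ Ioo (-1:ℝ) 1) (hρ1 : ρ1 ∈ Ioo (-1:ℝ) 1)
    (hjoint0 : ∀ y z : ℝ,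
      (μ {ω | Y00 ω ≤ y ∧ η ω ≤ z}).toReal = Phi2 (y / σ0) z ρ0)
    (hjoint1 : ∀ y z : ℝ,
      (μ {ω | Y10 ω ≤ y ∧ η ω ≤ z}).toReal = Phi2 (y / σ1) z ρ1)
    (hint0 : Integrable Y00 μ) (hint1 : Integrable Y10 μ) :
    ((∫ ω in {ω | 0 ≤ η ω}, (Y10 ω - Y00 ω) ∂μ) / (μ {ω | 0 ≤ η ω}).toReal
      = (∫ ω in {ω | η ω < 0}, (Y10 ω - Y00 ω) ∂μ) / (μ {ω | η ω < 0}).toReal)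
    ↔ ρ0 * σ0 = ρ1 * σ1 := by
  have hρ0' : ρ0 ^ 2 < 1 := (sq_lt_one_iff_abs_lt_one ρ0).2 (abs_lt.2 hρ0)
  have hρ1' : ρ1 ^ 2 < 1 := (sq_lt_one_iff_abs_lt_one ρ1).2 (abs_lt.2 hρ1)
  have hmap0 := map_eq_binormMeasure hY00 hη hσ0 hρ0' hjoint0
  have hmap1 := map_eq_binormMeasure hY10 hη hσ1 hρ1' hjoint1
  have hmass {t : Set ℝ} (ht : MeasurableSet t) : μ (η ⁻¹' t) = gaussianReal 0 1 t := by
    rw [← map_eq_gaussianReal_of_map_eq_binormMeasure hY00 hη hρ0' hmap0,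
      Measure.map_apply hη ht]
  have hdiff {t : Set ℝ} (ht : MeasurableSet t) : ∫ ω in η ⁻¹' t, (Y10 ω - Y00 ω) ∂μ
      = (σ1 * ρ1 - σ0 * ρ0) * ∫ y in t, y * gaussianPDFReal 0 1 y := by
    rw [integral_sub hint1.integrableOn hint0.integrableOn, sub_mul,
      setIntegral_preimage_eq_of_map_eq_binormMeasure hY10 hη hσ1.ne' hρ1' hmap1 ht,
      setIntegral_preimage_eq_of_map_eq_binormMeasure hY00 hη hσ0.ne' hρ0' hmap0 ht]
  change (∫ ω in η ⁻¹' Ici 0, _ ∂μ) / (μ (η ⁻¹' Ici 0)).toReal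
    = (∫ ω in η ⁻¹' Iio 0, _ ∂μ) / (μ (η ⁻¹' Iio 0)).toReal ↔ _
  rw [hdiff measurableSet_Ici, hdiff measurableSet_Iio, hmass measurableSet_Ici,
    hmass measurableSet_Iio, gaussianReal_Ici_zero, gaussianReal_Iio_zero,
    setIntegral_Ici_zero_mul_gaussianPDFReal, setIntegral_Iio_zero_mul_gaussianPDFReal,
    div_left_inj' (by simp), mul_neg, self_eq_neg, mul_eq_zero,
    or_iff_left (by positivity), sub_eq_zero]
  constructor <;> intro h <;> linarith
end

section
/- Bounds on the counterfactual cdf under copula stability: let (Y₀, Y₁, D) be observable with q = P(D=0) ∈ (0,1), and suppose the unobserved Y₁₀ satisfies: (a) there is a strictly increasing function v ↦ C(v, q) on [0,1] with C(F_{Y₀}(y), q) = P(Y₀ ≤ y, D=0) and C(F_{Y₁₀}(y), q) = P(Y₁₀ ≤ y, D=0) for all y; (b) F_{Y₁₀ | D=0} = F_{Y₁ | D=0}; and (c) v − C(v,q) is nondecreasing. Then for every y, F_{Y₀|D=1}(Q⁺_{Y₀|D=0}(F_{Y₁|D=0}(y))−) ≤ F_{Y₁₀|D=1}(y) ≤ F_{Y₀|D=1}(Q⁻_{Y₀|D=0}(F_{Y₁|D=0}(y))),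 where Q⁻ and Q⁺ are the lower and upper generalized quantile functions of Y₀ given D=0. -/
open Set MeasureTheory

/-- Conditional cdf `F_{Y|D=d}(y) = P(Y ≤ y, D = d) / P(D = d)`. -/
noncomputable def condCdf' {Ω : Type*} [MeasurableSpace Ω] (μ : Measure Ω)
    (Y D : Ω → ℝ) (d y : ℝ) : ℝ :=
  (μ {ω | Y ω ≤ y ∧ D ω = d}).toReal / (μ {ω | D ω = d}).toReal

/-- Upper generalized quantile function, valued in the extended reals. -/
noncomputable def Qplus (F : ℝ → ℝ) (u : ℝ) : EReal :=
  sSup ((fun x : ℝ => (x : EReal)) '' {x | F x ≤ u})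

/-- Extension of a cdf to the extended reals, with value `1` at `⊤` and `0` at `⊥`. -/
noncomputable def extCdf (F : ℝ → ℝ) (x : EReal) : ℝ :=
  if x = ⊤ then 1 else if x = ⊥ then 0 else F x.toReal

/-- CS bounds on the counterfactual cdf: let `(Y₀, Y₁, D)` be
observable with `q = P(D=0) ∈ (0,1)` and let the unobserved `Y₁₀` satisfy:
(a) there is a strictly increasing `v ↦ C(v,q)` on `[0,1]` with
`C(F_{Y₀}(y)) = P(Y₀ ≤ y, D=0)` and `C(F_{Y₁₀}(y)) = P(Y₁₀ ≤ y, D=0)`;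
(b) `F_{Y₁₀|D=0} = F_{Y₁|D=0}`; (c) `v − C(v)` is nondecreasing on `[0,1]`.
Then for every `y`,
`F_{Y₀|D=1}(Q⁺_{Y₀|D=0}(F_{Y₁|D=0}(y))−) ≤ F_{Y₁₀|D=1}(y)
  ≤ F_{Y₀|D=1}(Q⁻_{Y₀|D=0}(F_{Y₁|D=0}(y)))`,
where the left limit is the sup of `F_{Y₀|D=1}` over reals below the (extended-real)
quantile. -/
theorem cs_bounds_counterfactual
    {Ω : Type*} [MeasurableSpace Ω] (μ : Measure Ω) [IsProbabilityMeasure μ]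
    (Y0 Y1 Y10 D : Ω → ℝ)
    (hY0 : Measurable Y0) (hY1 : Measurable Y1) (hY10 : Measurable Y10)
    (hD : Measurable D) (hD01 : ∀ ω, D ω = 0 ∨ D ω = 1)
    (hq : (μ {ω | D ω = 0}).toReal ∈ Ioo (0:ℝ) 1)
    (C : ℝ → ℝ) (hC : StrictMonoOn C (Icc (0:ℝ) 1))
    (hC0 : ∀ y : ℝ,
      C ((μ {ω | Y0 ω ≤ y}).toReal) = (μ {ω | Y0 ω ≤ y ∧ D ω = 0}).toReal)
    (hC10 : ∀ y : ℝ,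
      C ((μ {ω | Y10 ω ≤ y}).toReal) = (μ {ω | Y10 ω ≤ y ∧ D ω = 0}).toReal)
    (hb : ∀ y : ℝ, μ {ω | Y10 ω ≤ y ∧ D ω = 0} = μ {ω | Y1 ω ≤ y ∧ D ω = 0})
    (hc : ∀ u ∈ Icc (0:ℝ) 1, ∀ v ∈ Icc (0:ℝ) 1, u ≤ v → u - C u ≤ v - C v)
    (y : ℝ) :
    sSup ((condCdf' μ Y0 D 1) ''
        {z : ℝ | (z : EReal) < Qplus (condCdf' μ Y0 D 0) (condCdf' μ Y1 D 0 y)})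
      ≤ condCdf' μ Y10 D 1 y ∧
    condCdf' μ Y10 D 1 y
      ≤ extCdf (condCdf' μ Y0 D 1)
          (Qminus (condCdf' μ Y0 D 0) (condCdf' μ Y1 D 0 y)) := by
  classical
  have hqr0 : 0 < (μ {ω | D ω = 0}).toReal := hq.1
  have hqr1 : (μ {ω | D ω = 0}).toReal < 1 := hq.2
  have hm0 : MeasurableSet {ω | D ω = 0} := hD (measurableSet_singleton 0)
  have hm1 : MeasurableSet {ω | D ω = 1} := hD (measurableSet_singleton 1)
  have hdisj : Disjoint {ω : Ω | D ω = 0} {ω : Ω | D ω = 1} := by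
    rw [Set.disjoint_left]
    intro ω h0 h1
    simp only [mem_setOf_eq] at h0 h1
    rw [h0] at h1; norm_num at h1
  -- splitting lemma
  have hsum : ∀ (Y : Ω → ℝ) (x : ℝ), Measurable Y →
      μ {ω | Y ω ≤ x} = μ {ω | Y ω ≤ x ∧ D ω = 0} + μ {ω | Y ω ≤ x ∧ D ω = 1} := by
    intro Y x hY
    have hset : {ω | Y ω ≤ x} =
        {ω | Y ω ≤ x ∧ D ω = 0} ∪ {ω | Y ω ≤ x ∧ D ω = 1} := by
      ext ω
      simp only [mem_setOf_eq, mem_union]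
      constructor
      · intro h
        rcases hD01 ω with h0 | h1
        · exact Or.inl ⟨h, h0⟩
        · exact Or.inr ⟨h, h1⟩
      · rintro (⟨h, _⟩ | ⟨h, _⟩) <;> exact h
    have hd : Disjoint {ω : Ω | Y ω ≤ x ∧ D ω = 0} {ω : Ω | Y ω ≤ x ∧ D ω = 1} := by
      rw [Set.disjoint_left]
      rintro ω ⟨_, h0⟩ ⟨_, h1⟩
      rw [h0] at h1; norm_num at h1
    have hms : MeasurableSet {ω : Ω | Y ω ≤ x ∧ D ω = 1} :=
      (hY measurableSet_Iic).inter hm1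
    rw [hset, measure_union hd hms]
  have hsumR : ∀ (Y : Ω → ℝ) (x : ℝ), Measurable Y →
      (μ {ω | Y ω ≤ x}).toReal =
        (μ {ω | Y ω ≤ x ∧ D ω = 0}).toReal + (μ {ω | Y ω ≤ x ∧ D ω = 1}).toReal := by
    intro Y x hY
    rw [hsum Y x hY, ENNReal.toReal_add (measure_ne_top _ _) (measure_ne_top _ _)]
  -- q1 = 1 - q0
  have hq1 : (μ {ω | D ω = 1}).toReal = 1 - (μ {ω | D ω = 0}).toReal := by
    have h := hsum (fun _ => (0:ℝ)) 0 measurable_const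
    simp only [le_refl, true_and, setOf_true, measure_univ] at h
    have h' := congrArg ENNReal.toReal h
    rw [ENNReal.toReal_add (measure_ne_top _ _) (measure_ne_top _ _),
      ENNReal.toReal_one] at h'
    linarith
  have hq1pos : 0 < (μ {ω | D ω = 1}).toReal := by rw [hq1]; linarith
  have mem01 : ∀ s : Set Ω, (μ s).toReal ∈ Icc (0:ℝ) 1 := by
    intro s
    refine ⟨ENNReal.toReal_nonneg, ?_⟩
    have h := ENNReal.toReal_mono (measure_ne_top μ univ) (measure_mono (subset_univ s))
    simpa using h
  have hmono : ∀ (Y : Ω → ℝ) (d : ℝ), Monotone (condCdf' μ Y D d) := by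
    intro Y d a b hab
    unfold condCdf'
    rcases eq_or_lt_of_le (ENNReal.toReal_nonneg (a := μ {ω | D ω = d})) with h0 | h0
    · rw [← h0]; simp
    · refine (div_le_div_iff_of_pos_right h0).mpr ?_
      exact ENNReal.toReal_mono (measure_ne_top _ _)
        (measure_mono (fun ω hω => ⟨le_trans hω.1 hab, hω.2⟩))
  -- C-values
  have hCt : C ((μ {ω | Y10 ω ≤ y}).toReal) = (μ {ω | Y1 ω ≤ y ∧ D ω = 0}).toReal := by
    rw [hC10 y, hb y]
  have hmulu : ∀ (Y : Ω → ℝ) (x : ℝ),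
      (μ {ω | D ω = 0}).toReal * condCdf' μ Y D 0 x = (μ {ω | Y ω ≤ x ∧ D ω = 0}).toReal := by
    intro Y x
    unfold condCdf'
    field_simp
  -- key lemma A
  have keyA : ∀ x : ℝ, condCdf' μ Y1 D 0 y ≤ condCdf' μ Y0 D 0 x →
      μ {ω | Y10 ω ≤ y ∧ D ω = 1} ≤ μ {ω | Y0 ω ≤ x ∧ D ω = 1} := by
    intro x hx
    have hqle : (μ {ω | Y1 ω ≤ y ∧ D ω = 0}).toReal ≤ (μ {ω | Y0 ω ≤ x ∧ D ω = 0}).toReal := by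
      rw [← hmulu Y1 y, ← hmulu Y0 x]
      exact mul_le_mul_of_nonneg_left hx (le_of_lt hqr0)
    have htF : (μ {ω | Y10 ω ≤ y}).toReal ≤ (μ {ω | Y0 ω ≤ x}).toReal := by
      by_contra hlt
      push_neg at hlt
      have h := hC (mem01 _) (mem01 _) hlt
      rw [hCt, hC0 x] at h
      linarith
    have hdiff := hc _ (mem01 {ω | Y10 ω ≤ y}) _ (mem01 {ω | Y0 ω ≤ x}) htF
    rw [hC10 y, hC0 x] at hdiff
    have e1 := hsumR Y10 y hY10
    have e2 := hsumR Y0 x hY0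
    have final : (μ {ω | Y10 ω ≤ y ∧ D ω = 1}).toReal ≤
        (μ {ω | Y0 ω ≤ x ∧ D ω = 1}).toReal := by linarith
    exact (ENNReal.toReal_le_toReal (measure_ne_top _ _) (measure_ne_top _ _)).mp final
  -- key lemma B
  have keyB : ∀ x : ℝ, condCdf' μ Y0 D 0 x ≤ condCdf' μ Y1 D 0 y →
      (μ {ω | Y0 ω ≤ x ∧ D ω = 1}).toReal ≤ (μ {ω | Y10 ω ≤ y ∧ D ω = 1}).toReal := by
    intro x hx
    have hqle : (μ {ω | Y0 ω ≤ x ∧ D ω = 0}).toReal ≤ (μ {ω | Y1 ω ≤ y ∧ D ω = 0}).toReal := by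
      rw [← hmulu Y1 y, ← hmulu Y0 x]
      exact mul_le_mul_of_nonneg_left hx (le_of_lt hqr0)
    have htF : (μ {ω | Y0 ω ≤ x}).toReal ≤ (μ {ω | Y10 ω ≤ y}).toReal := by
      by_contra hlt
      push_neg at hlt
      have h := hC (mem01 _) (mem01 _) hlt
      rw [hCt, hC0 x] at h
      linarith
    have hdiff := hc _ (mem01 {ω | Y0 ω ≤ x}) _ (mem01 {ω | Y10 ω ≤ y}) htF
    rw [hC10 y, hC0 x] at hdiff
    have e1 := hsumR Y10 y hY10
    have e2 := hsumR Y0 x hY0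
    linarith
  constructor
  · -- lower bound
    apply Real.sSup_le
    · rintro w ⟨z, hz, rfl⟩
      simp only [mem_setOf_eq, Qplus] at hz
      rw [lt_sSup_iff] at hz
      obtain ⟨a, ⟨x, hxT, rfl⟩, hza⟩ := hz
      have hzx : z ≤ x := le_of_lt (by exact_mod_cast (show (z:EReal) < (x:EReal) from hza))
      refine le_trans (hmono Y0 1 hzx) ?_
      have hnum := keyB x hxT
      unfold condCdf'
      exact (div_le_div_iff_of_pos_right hq1pos).mpr hnum
    · unfold condCdf'
      positivity
  · -- upper bound
    set e := Qminus (condCdf' μ Y0 D 0) (condCdf' μ Y1 D 0 y) with he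
    rcases eq_or_ne e ⊤ with hT | hT
    · rw [hT]
      rw [show extCdf (condCdf' μ Y0 D 1) ⊤ = 1 from if_pos rfl]
      unfold condCdf'
      rw [div_le_one hq1pos]
      exact ENNReal.toReal_mono (measure_ne_top _ _) (measure_mono (fun ω hω => hω.2))
    rcases eq_or_ne e ⊥ with hB | hB
    · -- all reals are in S
      have hall : ∀ x : ℝ, condCdf' μ Y1 D 0 y ≤ condCdf' μ Y0 D 0 x := by
        intro x
        by_contra hcon
        push_neg at hcon
        have hlb : (x : EReal) ≤ e := by
          rw [he, Qminus]
          apply le_sInf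
          rintro a ⟨s, hs, rfl⟩
          simp only [mem_setOf_eq] at hs
          by_contra hxs
          push_neg at hxs
          have hsx : s ≤ x := le_of_lt (by exact_mod_cast (show (s:EReal) < (x:EReal) from hxs))
          exact absurd (le_trans hs (hmono Y0 0 hsx)) (not_le.mpr hcon)
        rw [hB] at hlb
        exact (EReal.coe_ne_bot x) (le_bot_iff.mp hlb)
      have hc0 : μ {ω | Y10 ω ≤ y ∧ D ω = 1} = 0 := by
        have hmeas : ∀ n : ℕ, NullMeasurableSet {ω | Y0 ω ≤ -(n:ℝ) ∧ D ω = 1} μ :=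
          fun n => ((hY0 measurableSet_Iic).inter hm1).nullMeasurableSet
        have hanti : Antitone (fun n : ℕ => {ω | Y0 ω ≤ -(n:ℝ) ∧ D ω = 1}) := by
          intro n m hnm ω hω
          refine ⟨le_trans hω.1 ?_, hω.2⟩
          simp only [neg_le_neg_iff]
          exact_mod_cast hnm
        have htend := tendsto_measure_iInter_atTop (μ := μ) hmeas hanti ⟨0, measure_ne_top _ _⟩
        have hempty : (⋂ n : ℕ, {ω | Y0 ω ≤ -(n:ℝ) ∧ D ω = 1}) = ∅ := by
          ext ω
          simp only [mem_iInter, mem_setOf_eq, mem_empty_iff_false, iff_false, not_forall]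
          obtain ⟨n, hn⟩ := exists_nat_gt (-(Y0 ω))
          exact ⟨n, fun h => absurd h.1 (by linarith)⟩
        rw [hempty, measure_empty] at htend
        have hle : μ {ω | Y10 ω ≤ y ∧ D ω = 1} ≤ 0 :=
          ge_of_tendsto' htend (fun n => keyA (-(n:ℝ)) (hall _))
        exact le_antisymm hle (zero_le (a := μ {ω | Y10 ω ≤ y ∧ D ω = 1}))
      rw [hB]
      simp only [extCdf, if_neg (bot_ne_top (α := EReal)), if_pos rfl]
      unfold condCdf'
      rw [hc0]
      simp
    · -- e is a real number r
      set r := e.toReal with hr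
      have hre : (r : EReal) = e := EReal.coe_toReal hT hB
      have hx : ∀ x : ℝ, r < x → condCdf' μ Y1 D 0 y ≤ condCdf' μ Y0 D 0 x := by
        intro x hrx
        have hlt : e < (x : EReal) := by
          rw [← hre]; exact_mod_cast hrx
        rw [he, Qminus, sInf_lt_iff] at hlt
        obtain ⟨a, ⟨s, hs, rfl⟩, hax⟩ := hlt
        simp only [mem_setOf_eq] at hs
        have hsx : s ≤ x := le_of_lt (by exact_mod_cast (show (s:EReal) < (x:EReal) from hax))
        exact le_trans hs (hmono Y0 0 hsx)
      have hnum : μ {ω | Y10 ω ≤ y ∧ D ω = 1} ≤ μ {ω | Y0 ω ≤ r ∧ D ω = 1} := by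
        have hmeas : ∀ n : ℕ, NullMeasurableSet {ω | Y0 ω ≤ r + 1/((n:ℝ)+1) ∧ D ω = 1} μ :=
          fun n => ((hY0 measurableSet_Iic).inter hm1).nullMeasurableSet
        have hanti : Antitone (fun n : ℕ => {ω | Y0 ω ≤ r + 1/((n:ℝ)+1) ∧ D ω = 1}) := by
          intro n m hnm ω hω
          refine ⟨le_trans hω.1 ?_, hω.2⟩
          have h1 : ((n:ℝ)+1) ≤ ((m:ℝ)+1) := by
            have : (n:ℝ) ≤ (m:ℝ) := by exact_mod_cast hnm
            linarith
          gcongr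
        have htend := tendsto_measure_iInter_atTop (μ := μ) hmeas hanti ⟨0, measure_ne_top _ _⟩
        have hInter : (⋂ n : ℕ, {ω | Y0 ω ≤ r + 1/((n:ℝ)+1) ∧ D ω = 1}) =
            {ω | Y0 ω ≤ r ∧ D ω = 1} := by
          ext ω
          simp only [mem_iInter, mem_setOf_eq]
          constructor
          · intro h
            refine ⟨?_, (h 0).2⟩
            by_contra hlt
            push_neg at hlt
            obtain ⟨n, hn⟩ := exists_nat_one_div_lt (sub_pos.mpr hlt)
            have := (h n).1
            linarith
          · rintro ⟨h1, h2⟩ n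
            refine ⟨le_trans h1 ?_, h2⟩
            have : (0:ℝ) < 1/((n:ℝ)+1) := by positivity
            linarith
        rw [hInter] at htend
        refine ge_of_tendsto' htend (fun n => ?_)
        refine keyA (r + 1/((n:ℝ)+1)) (hx _ ?_)
        have : (0:ℝ) < 1/((n:ℝ)+1) := by positivity
        linarith
      have hfin : (μ {ω | Y10 ω ≤ y ∧ D ω = 1}).toReal ≤
          (μ {ω | Y0 ω ≤ r ∧ D ω = 1}).toReal :=
        ENNReal.toReal_mono (measure_ne_top _ _) hnum
      rw [← hre]
      simp only [extCdf, if_neg (EReal.coe_ne_top r), if_neg (EReal.coe_ne_bot r),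
        EReal.toReal_coe]
      unfold condCdf'
      exact (div_le_div_iff_of_pos_right hq1pos).mpr hfin
end

section
/- Point identification for continuous strictly increasing distributions: under the assumptions of the preceding bounds, if additionally F_{Y₀|D=0} and F_{Y₁|D=0} are continuous and strictly increasing on ℝ (so Q⁺_{Y₀|D=0} = Q⁻_{Y₀|D=0} and F_{Y₀|D=0} ∘ Q⁻_{Y₀|D=0} = id on (0,1)), then F_{Y₁₀|D=1}(y) = F_{Y₀|D=1}(Q⁻_{Y₀|D=0}(F_{Y₁|D=0}(y))) for all y ∈ ℝ, and moreover F_{Y₀|D=1} is continuous at the evaluation point so the lower and upper bounds coincide. -/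
open Set MeasureTheory

/-!
Since `F_{Y₀|D=0}` is a continuous strictly increasing cdf, it takes the value `F_{Y₁|D=0}(y)`
at exactly one point `r`, and `Q⁻_{Y₀|D=0}` at that level is `r`. Writing `F_Y` for the
unconditional cdf, the subcopula identity `C(F_Y(z)) = P(Y ≤ z, D = 0)` together with
`F_{Y₁₀|D=0} = F_{Y₁|D=0}` gives
`C(F_{Y₁₀}(y)) = C(F_{Y₀}(r))`, hence `F_{Y₁₀}(y) = F_{Y₀}(r)` by injectivity of `C`; as
`P(Y ≤ z, D = 1) = F_Y(z) - C(F_Y(z))`, the `D = 1` conditional cdfs agree as well. The same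
formula gives continuity of `F_{Y₀|D=1}`: `C ∘ F_{Y₀}` is continuous, and a jump of the monotone
`F_{Y₀}` would survive composition with the strictly increasing `C`.
-/

open Filter Topology ProbabilityTheory Function

lemma Qminus_apply_of_strictMono {F : ℝ → ℝ} (hF : StrictMono F) (r : ℝ) :
    Qminus F (F r) = r := by
  have hset : {x | F r ≤ F x} = Ici r := by ext x; exact hF.le_iff_le
  rw [Qminus, hset]
  exact (EReal.coe_strictMono.monotone.map_isLeast isLeast_Ici).isGLB.sInf_eq

lemma Monotone.continuous_of_strictMonoOn_comp {s : Set ℝ} [s.OrdConnected] {C G : ℝ → ℝ}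
    (hC : StrictMonoOn C s) (hG : Monotone G) (hGs : ∀ x, G x ∈ s)
    (hCG : Continuous (C ∘ G)) : Continuous G := by
  refine continuous_iff_continuousAt.2 fun r => hG.continuousAt_iff_leftLim_eq_rightLim.2 ?_
  by_contra hne
  have hlt : leftLim G r < rightLim G r := (hG.leftLim_le_rightLim le_rfl).lt_of_ne hne
  -- `C u` is squeezed between the one-sided limits of `C ∘ G` at `r`, both equal to `C (G r)`.
  have hjump : ∀ u ∈ Ioo (leftLim G r) (rightLim G r), u = G r := by
    rintro u ⟨hLu, huR⟩
    have hu : u ∈ s := Set.OrdConnected.out ‹_› (hGs (r - 1)) (hGs (r + 1))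
      ⟨(hG.le_leftLim (by linarith)).trans hLu.le, huR.le.trans (hG.rightLim_le (by linarith))⟩
    have hleft : C (G r) ≤ C u :=
      _root_.le_of_tendsto
        (hCG.continuousAt.tendsto.mono_left (nhdsWithin_le_nhds (s := Iio r))) <|
        eventually_nhdsWithin_of_forall fun z (hz : z < r) =>
          (hC (hGs z) hu ((hG.le_leftLim hz).trans_lt hLu)).le
    have hright : C u ≤ C (G r) :=
      _root_.ge_of_tendsto
        (hCG.continuousAt.tendsto.mono_left (nhdsWithin_le_nhds (s := Ioi r))) <|
        eventually_nhdsWithin_of_forall fun z (hz : r < z) =>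
          (hC hu (hGs z) (huR.trans_le (hG.rightLim_le hz))).le
    exact hC.injOn hu (hGs r) (le_antisymm hright hleft)
  obtain ⟨u, hu⟩ := exists_between hlt
  obtain ⟨v, hv⟩ := exists_between hu.1
  exact hv.2.ne ((hjump v ⟨hv.1, hv.2.trans hu.2⟩).trans (hjump u hu).symm)

lemma ProbabilityTheory.Ioo_subset_range_cdf {ν : Measure ℝ} (hν : Continuous (cdf ν)) :
    Ioo 0 1 ⊆ range (cdf ν) := fun _ hc =>
  mem_range_of_exists_le_of_exists_ge hν
    ((tendsto_cdf_atBot (μ := ν)).eventually (eventually_le_nhds hc.1)).exists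
    ((tendsto_cdf_atTop (μ := ν)).eventually (eventually_ge_nhds hc.2)).exists

section condCdf'

variable {Ω : Type*} [MeasurableSpace Ω] {μ : Measure Ω} {Y D : Ω → ℝ} {d : ℝ}

lemma condCdf'_eq_cdf [IsFiniteMeasure μ] (hY : Measurable Y) (hD : Measurable D)
    (hd : μ {ω | D ω = d} ≠ 0) : condCdf' μ Y D d = cdf ((μ[|D ⁻¹' {d}]).map Y) := by
  have := cond_isProbabilityMeasure (s := D ⁻¹' {d}) hd
  have := Measure.isProbabilityMeasure_map (μ := μ[|D ⁻¹' {d}]) hY.aemeasurable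
  ext y
  rw [cdf_eq_real, map_measureReal_apply hY measurableSet_Iic, measureReal_def,
    cond_apply (hD (measurableSet_singleton d)), ENNReal.toReal_mul, ENNReal.toReal_inv, condCdf',
    div_eq_inv_mul, inter_comm]
  rfl

lemma condCdf'_nonneg (y : ℝ) : 0 ≤ condCdf' μ Y D d y :=
  div_nonneg ENNReal.toReal_nonneg ENNReal.toReal_nonneg

lemma condCdf'_le_one [IsFiniteMeasure μ] (y : ℝ) : condCdf' μ Y D d y ≤ 1 :=
  div_le_one_of_le₀ (measureReal_mono fun _ h => h.2) ENNReal.toReal_nonneg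

lemma condCdf'_mem_Ioo_of_strictMono [IsFiniteMeasure μ] (hF : StrictMono (condCdf' μ Y D d))
    (y : ℝ) : condCdf' μ Y D d y ∈ Ioo 0 1 :=
  ⟨(condCdf'_nonneg (y - 1)).trans_lt (hF (by linarith)),
    (hF (by linarith : y < y + 1)).trans_le (condCdf'_le_one _)⟩

lemma measureReal_le_and_eq_mul_condCdf' (hd : μ.real {ω | D ω = d} ≠ 0) (y : ℝ) :
    μ.real {ω | Y ω ≤ y ∧ D ω = d} = μ.real {ω | D ω = d} * condCdf' μ Y D d y :=
  (mul_div_cancel₀ _ hd).symm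

lemma measureReal_and_eq_one_eq_sub [IsFiniteMeasure μ] (hD : Measurable D)
    (hD01 : ∀ ω, D ω = 0 ∨ D ω = 1) (p : Ω → Prop) :
    μ.real {ω | p ω ∧ D ω = 1} = μ.real {ω | p ω} - μ.real {ω | p ω ∧ D ω = 0} := by
  have hdiff : {ω | p ω ∧ D ω = 1} = {ω | p ω} \ {ω | D ω = 0} := by
    ext ω
    rcases hD01 ω with h | h <;> simp [h]
  rw [hdiff, ← measureReal_inter_add_sdiff (s := {ω | p ω}) (hD (measurableSet_singleton 0))]
  exact (add_sub_cancel_left _ _).symm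

lemma condCdf'_one_eq_sub_comp [IsFiniteMeasure μ] (hD : Measurable D)
    (hD01 : ∀ ω, D ω = 0 ∨ D ω = 1) {C : ℝ → ℝ}
    (hCY : ∀ y, C (μ.real {ω | Y ω ≤ y}) = μ.real {ω | Y ω ≤ y ∧ D ω = 0}) (y : ℝ) :
    condCdf' μ Y D 1 y =
      (μ.real {ω | Y ω ≤ y} - C (μ.real {ω | Y ω ≤ y})) / μ.real {ω | D ω = 1} := by
  change μ.real _ / _ = _
  rw [measureReal_and_eq_one_eq_sub hD hD01, hCY]
  rfl

end condCdf'

theorem cic_point_identification_general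
    {Ω : Type*} [MeasurableSpace Ω] (μ : Measure Ω) [IsProbabilityMeasure μ]
    (Y0 Y1 Y10 D : Ω → ℝ)
    (hY0 : Measurable Y0)
    (hD : Measurable D) (hD01 : ∀ ω, D ω = 0 ∨ D ω = 1)
    (hq : (μ {ω | D ω = 0}).toReal ∈ Ioo (0:ℝ) 1)
    (C : ℝ → ℝ) (hC : StrictMonoOn C (Icc (0:ℝ) 1))
    (hC0 : ∀ y : ℝ,
      C ((μ {ω | Y0 ω ≤ y}).toReal) = (μ {ω | Y0 ω ≤ y ∧ D ω = 0}).toReal)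
    (hC10 : ∀ y : ℝ,
      C ((μ {ω | Y10 ω ≤ y}).toReal) = (μ {ω | Y10 ω ≤ y ∧ D ω = 0}).toReal)
    (hb : ∀ y : ℝ, μ {ω | Y10 ω ≤ y ∧ D ω = 0} = μ {ω | Y1 ω ≤ y ∧ D ω = 0})
    (hcont0 : Continuous (fun y => condCdf' μ Y0 D 0 y))
    (hmono0 : StrictMono (fun y => condCdf' μ Y0 D 0 y))
    (hmono1 : StrictMono (fun y => condCdf' μ Y1 D 0 y))
    (y : ℝ) :
    ∃ r : ℝ,
      Qminus (condCdf' μ Y0 D 0) (condCdf' μ Y1 D 0 y) = (r : EReal) ∧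
      ContinuousAt (fun z => condCdf' μ Y0 D 1 z) r ∧
      condCdf' μ Y10 D 1 y = condCdf' μ Y0 D 1 r := by
  have hq0 : μ.real {ω | D ω = 0} ≠ 0 := hq.1.ne'
  obtain ⟨r, hr⟩ : ∃ r, condCdf' μ Y0 D 0 r = condCdf' μ Y1 D 0 y := by
    rw [condCdf'_eq_cdf hY0 hD ((measureReal_ne_zero_iff).1 hq0)] at hcont0 ⊢
    exact Ioo_subset_range_cdf hcont0 (condCdf'_mem_Ioo_of_strictMono hmono1 y)
  have hCG0 : Continuous fun z => C (μ.real {ω | Y0 ω ≤ z}) :=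
    (continuous_const.mul hcont0).congr fun z =>
      ((hC0 z).trans (measureReal_le_and_eq_mul_condCdf' hq0 z)).symm
  have hG0 : Continuous fun z => μ.real {ω | Y0 ω ≤ z} :=
    Monotone.continuous_of_strictMonoOn_comp hC
      (fun _ _ hab => measureReal_mono fun _ h => le_trans h hab)
      (fun _ => ⟨measureReal_nonneg, measureReal_le_one⟩) hCG0
  have hG : μ.real {ω | Y10 ω ≤ y} = μ.real {ω | Y0 ω ≤ r} := by
    refine hC.injOn ⟨measureReal_nonneg, measureReal_le_one⟩
      ⟨measureReal_nonneg, measureReal_le_one⟩ ?_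
    calc C (μ.real {ω | Y10 ω ≤ y})
        = μ.real {ω | Y10 ω ≤ y ∧ D ω = 0} := hC10 y
      _ = μ.real {ω | Y1 ω ≤ y ∧ D ω = 0} := congrArg ENNReal.toReal (hb y)
      _ = μ.real {ω | D ω = 0} * condCdf' μ Y0 D 0 r := by
        rw [hr, measureReal_le_and_eq_mul_condCdf' hq0]
      _ = C (μ.real {ω | Y0 ω ≤ r}) :=
        ((hC0 r).trans (measureReal_le_and_eq_mul_condCdf' hq0 r)).symm
  refine ⟨r, by rw [← hr, Qminus_apply_of_strictMono hmono0], ?_, ?_⟩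
  · simp_rw [condCdf'_one_eq_sub_comp hD hD01 hC0]
    exact ((hG0.sub hCG0).div_const _).continuousAt
  · rw [condCdf'_one_eq_sub_comp hD hD01 hC10, condCdf'_one_eq_sub_comp hD hD01 hC0, hG]

/-- point identification, changes-in-changes formula: under the
assumptions of the CS bounds, if in addition `F_{Y₀|D=0}` and `F_{Y₁|D=0}` are
continuous and strictly increasing on `ℝ`, then the quantile
`Q⁻_{Y₀|D=0}(F_{Y₁|D=0}(y))` is a (finite) real `r`, `F_{Y₀|D=1}` is continuous at
`r` (so the lower and upper bounds coincide), and
`F_{Y₁₀|D=1}(y) = F_{Y₀|D=1}(Q⁻_{Y₀|D=0}(F_{Y₁|D=0}(y)))`. -/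
theorem cic_point_identification
    {Ω : Type*} [MeasurableSpace Ω] (μ : Measure Ω) [IsProbabilityMeasure μ]
    (Y0 Y1 Y10 D : Ω → ℝ)
    (hY0 : Measurable Y0) (hY1 : Measurable Y1) (hY10 : Measurable Y10)
    (hD : Measurable D) (hD01 : ∀ ω, D ω = 0 ∨ D ω = 1)
    (hq : (μ {ω | D ω = 0}).toReal ∈ Ioo (0:ℝ) 1)
    (C : ℝ → ℝ) (hC : StrictMonoOn C (Icc (0:ℝ) 1))
    (hC0 : ∀ y : ℝ,
      C ((μ {ω | Y0 ω ≤ y}).toReal) = (μ {ω | Y0 ω ≤ y ∧ D ω = 0}).toReal)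
    (hC10 : ∀ y : ℝ,
      C ((μ {ω | Y10 ω ≤ y}).toReal) = (μ {ω | Y10 ω ≤ y ∧ D ω = 0}).toReal)
    (hb : ∀ y : ℝ, μ {ω | Y10 ω ≤ y ∧ D ω = 0} = μ {ω | Y1 ω ≤ y ∧ D ω = 0})
    (hc : ∀ u ∈ Icc (0:ℝ) 1, ∀ v ∈ Icc (0:ℝ) 1, u ≤ v → u - C u ≤ v - C v)
    (hcont0 : Continuous (fun y => condCdf' μ Y0 D 0 y))
    (hmono0 : StrictMono (fun y => condCdf' μ Y0 D 0 y))
    (hcont1 : Continuous (fun y => condCdf' μ Y1 D 0 y))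
    (hmono1 : StrictMono (fun y => condCdf' μ Y1 D 0 y))
    (y : ℝ) :
    ∃ r : ℝ,
      Qminus (condCdf' μ Y0 D 0) (condCdf' μ Y1 D 0 y) = (r : EReal) ∧
      ContinuousAt (fun z => condCdf' μ Y0 D 1 z) r ∧
      condCdf' μ Y10 D 1 y = condCdf' μ Y0 D 1 r :=
  cic_point_identification_general μ Y0 Y1 Y10 D hY0 hD hD01 hq C hC hC0 hC10 hb hcont0 hmono0
    hmono1 y
end
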